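/- Let |ψ_±⟩ be unit vectors and ρ_± density matrices in finite-dimensional Hilbert spaces. If a completely positive trace-non-increasing map E satisfies E(|ψ_±⟩⟨ψ_±|) = p_± ρ_± with p_± > 0 and F(ρ_+,ρ_−) < |⟨ψ_+|ψ_−⟩|, then min{p_+, p_−} ≤ (1 − |⟨ψ_+|ψ_−⟩|)/(1 − F(ρ_+, ρ_−)). -/

import Mathlib

/-!
Choi's theorem gives Kraus operators `E X = ∑ₖ Kₖ X Kₖᴴ`, and trace non-increase says
`N = ∑ₖ Kₖᴴ Kₖ ≤ 1`. Split `⟨ψ₊|ψ₋⟩ = ⟨ψ₊|N|ψ₋⟩ + ⟨ψ₊|1 - N|ψ₋⟩`. The first term is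
`Tr (A₊ᴴ A₋)` for the matrices `A±` with columns `Kₖ ψ±`, which satisfy `A± A±ᴴ = p± ρ±`, so
Uhlmann's inequality `|Tr (Aᴴ B)| ≤ F(A Aᴴ, B Bᴴ)` bounds it by `√(p₊ p₋) F(ρ₊, ρ₋)`; the second
is at most `√((1 - p₊)(1 - p₋))` by Cauchy–Schwarz for the positive form `1 - N`. As
`√(p₊ p₋) + √((1 - p₊)(1 - p₋)) ≤ 1`, this gives `|⟨ψ₊|ψ₋⟩| ≤ 1 - √(p₊ p₋) (1 - F)`, and
`min p₊ p₋ ≤ √(p₊ p₋)`.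
-/

open Matrix Set
open scoped ComplexOrder

/-- Square root of a positive semidefinite matrix (junk value `0` otherwise). -/
noncomputable def msqrt {n : Type*} [Fintype n] [DecidableEq n] (A : Matrix n n ℂ) :
    Matrix n n ℂ :=
  open scoped Classical in
  if h : A.PosSemidef then
    (h.1.eigenvectorUnitary : Matrix n n ℂ) * diagonal ((↑) ∘ Real.sqrt ∘ h.1.eigenvalues) *
      (star h.1.eigenvectorUnitary : Matrix n n ℂ)
  else 0

/-- Uhlmann fidelity `F(ρ,σ) = Tr √(√ρ σ √ρ)`. -/
noncomputable def fid {n : Type*} [Fintype n] [DecidableEq n] (ρ σ : Matrix n n ℂ) : ℝ :=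
  (msqrt (msqrt ρ * σ * msqrt ρ)).trace.re

/-- The rank-one projector `|φ⟩⟨φ|` as a matrix. -/
noncomputable def outer {n : Type*} (φ : n → ℂ) : Matrix n n ℂ := Matrix.of fun i j => φ i * star (φ j)

/-- The inner product `⟨φ|ψ⟩`. -/
noncomputable def dot {n : Type*} [Fintype n] (φ ψ : n → ℂ) : ℂ := ∑ i, star (φ i) * ψ i

/-- The Choi matrix of a linear map on matrices. -/
noncomputable def choi {n : Type*} [Fintype n] [DecidableEq n]
    (E : Matrix n n ℂ →ₗ[ℂ] Matrix n n ℂ) : Matrix (n × n) (n × n) ℂ :=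
  Matrix.of fun p q => (E (Matrix.single p.1 q.1 1)) p.2 q.2

/-- A quantum operation: a completely positive (positive semidefinite Choi matrix)
trace-non-increasing linear map on matrices. -/
def IsQuantumOp {n : Type*} [Fintype n] [DecidableEq n]
    (E : Matrix n n ℂ →ₗ[ℂ] Matrix n n ℂ) : Prop :=
  (choi E).PosSemidef ∧ ∀ ρ : Matrix n n ℂ, ρ.PosSemidef → (E ρ).trace.re ≤ ρ.trace.re

open scoped MatrixOrder

section Sqrt
variable {n : Type*} [Fintype n] [DecidableEq n] {A : Matrix n n ℂ}

lemma msqrt_eq_cfc (hA : A.PosSemidef) : msqrt A = cfc Real.sqrt A := by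
  rw [hA.1.cfc_eq, msqrt, dif_pos hA]
  rfl

lemma msqrt_eq_sqrt (hA : A.PosSemidef) : msqrt A = CFC.sqrt A := by
  rw [msqrt_eq_cfc hA, CFC.sqrt_eq_real_sqrt A hA.nonneg, cfcₙ_eq_cfc]

lemma msqrt_mul_self (hA : A.PosSemidef) : msqrt A * msqrt A = A := by
  rw [msqrt_eq_sqrt hA]
  exact CFC.sqrt_mul_sqrt_self A hA.nonneg

lemma posSemidef_msqrt (hA : A.PosSemidef) : (msqrt A).PosSemidef := by
  rw [msqrt_eq_sqrt hA]
  exact (CFC.sqrt_nonneg A).posSemidef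

lemma conjTranspose_msqrt (hA : A.PosSemidef) : (msqrt A)ᴴ = msqrt A :=
  (posSemidef_msqrt hA).1

end Sqrt

section CauchySchwarz
variable {n m : Type*} [Fintype n] [Fintype m]

lemma norm_star_dotProduct_le (v w : n → ℂ) :
    ‖star v ⬝ᵥ w‖ ≤ √(star v ⬝ᵥ v).re * √(star w ⬝ᵥ w).re := by
  have h := norm_inner_le_norm (𝕜 := ℂ) (WithLp.toLp 2 v) (WithLp.toLp 2 w)
  rw [norm_eq_sqrt_re_inner (𝕜 := ℂ) (WithLp.toLp 2 v),
    norm_eq_sqrt_re_inner (𝕜 := ℂ) (WithLp.toLp 2 w)] at h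
  simp only [EuclideanSpace.inner_eq_star_dotProduct] at h
  rwa [dotProduct_comm w, dotProduct_comm v, dotProduct_comm w] at h

lemma norm_trace_conjTranspose_mul_le (M N : Matrix n m ℂ) :
    ‖(Mᴴ * N).trace‖ ≤ √(Mᴴ * M).trace.re * √(Nᴴ * N).trace.re := by
  simpa only [star_vec_dotProduct_vec] using norm_star_dotProduct_le M.vec N.vec

lemma star_dotProduct_conjTranspose_mul_mulVec (T : Matrix m n ℂ) (x y : n → ℂ) :
    star x ⬝ᵥ ((Tᴴ * T) *ᵥ y) = star (T *ᵥ x) ⬝ᵥ (T *ᵥ y) := by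
  rw [← mulVec_mulVec, dotProduct_mulVec, ← star_mulVec]

lemma Matrix.PosSemidef.norm_star_dotProduct_mulVec_le [DecidableEq n] {Q : Matrix n n ℂ}
    (hQ : Q.PosSemidef) (x y : n → ℂ) :
    ‖star x ⬝ᵥ (Q *ᵥ y)‖ ≤ √(star x ⬝ᵥ (Q *ᵥ x)).re * √(star y ⬝ᵥ (Q *ᵥ y)).re := by
  obtain ⟨T, rfl⟩ := CStarAlgebra.nonneg_iff_eq_star_mul_self.mp hQ.nonneg
  simp only [star_eq_conjTranspose, star_dotProduct_conjTranspose_mul_mulVec]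
  exact norm_star_dotProduct_le _ _

end CauchySchwarz

lemma mul_conjTranspose_inv_sqrt_smul {n m : Type*} [Fintype m] {A : Matrix n m ℂ} {p : ℝ} (hp : 0 < p)
    {ρ : Matrix n n ℂ} (hA : A * Aᴴ = (p : ℂ) • ρ) :
    ((√p)⁻¹ : ℂ) • A * (((√p)⁻¹ : ℂ) • A)ᴴ = ρ := by
  have hs : (√p : ℂ) * √p = p := by exact_mod_cast Real.mul_self_sqrt hp.le
  have hs₀ : (√p : ℂ) ≠ 0 := by exact_mod_cast (Real.sqrt_pos.mpr hp).ne'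
  rw [conjTranspose_smul, Matrix.smul_mul, Matrix.mul_smul, hA, smul_smul, smul_smul,
    star_inv₀, Complex.star_def, Complex.conj_ofReal, ← hs]
  field_simp
  rw [one_smul]

section Uhlmann
variable {n m : Type*} [Fintype n] [Fintype m]

lemma mul_eq_self_of_mul_mul_conjTranspose {P : Matrix n n ℂ} {A : Matrix n m ℂ}
    (hP : Pᴴ = P) (h : P * (A * Aᴴ) = A * Aᴴ) : P * A = A := by
  have h' : A * (Aᴴ * P) = A * Aᴴ := by
    simpa [hP, Matrix.mul_assoc] using congrArg conjTranspose h
  rw [← sub_eq_zero, ← self_mul_conjTranspose_eq_zero]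
  simp [Matrix.sub_mul, Matrix.mul_sub, Matrix.mul_assoc, hP, h, h']

variable [DecidableEq n]

theorem exists_eq_msqrt_mul (A : Matrix n m ℂ) :
    ∃ U : Matrix n m ℂ, A = msqrt (A * Aᴴ) * U ∧ U * Uᴴ ≤ 1 := by
  have hρ := posSemidef_self_mul_conjTranspose A
  generalize hρ_eq : A * Aᴴ = ρ at hρ
  have hc (f : ℝ → ℝ) : ContinuousOn f (spectrum ℝ ρ) := ρ.finite_real_spectrum.continuousOn f
  have hspec : ∀ x ∈ spectrum ℝ ρ, 0 ≤ x := spectrum_nonneg_of_nonneg hρ.nonneg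
  have hsa (f : ℝ → ℝ) : (cfc f ρ)ᴴ = cfc f ρ := cfc_predicate f ρ
  have hmul (f g : ℝ → ℝ) : cfc f ρ * cfc g ρ = cfc (fun x => f x * g x) ρ :=
    (cfc_mul f g ρ (hc f) (hc g)).symm
  have hmulρ (f : ℝ → ℝ) : cfc f ρ * ρ = cfc (fun x => f x * x) ρ := by
    conv_lhs => enter [2]; rw [← cfc_id' ℝ ρ]
    exact hmul f fun x => x
  refine ⟨cfc (fun x => (√x)⁻¹) ρ * A, ?_, ?_⟩
  · -- `√ρ * ρ^(-1/2)` is the projection onto the range of `ρ`, which contains the range of `A`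
    rw [← Matrix.mul_assoc, msqrt_eq_cfc hρ, hmul]
    refine (mul_eq_self_of_mul_mul_conjTranspose (hsa _) ?_).symm
    rw [hρ_eq, hmulρ]
    conv_rhs => rw [← cfc_id' ℝ ρ]
    refine cfc_congr fun x hx => ?_
    rcases (hspec x hx).eq_or_lt with rfl | hx₀
    · simp
    · simp [(Real.sqrt_pos.mpr hx₀).ne']
  · rw [conjTranspose_mul, hsa, Matrix.mul_assoc, ← Matrix.mul_assoc A, hρ_eq, ← Matrix.mul_assoc,
      hmulρ, hmul]
    refine cfc_le_one _ _ fun x hx => ?_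
    rw [mul_right_comm, ← mul_inv, Real.mul_self_sqrt (hspec x hx)]
    exact inv_mul_le_one

lemma re_trace_conjTranspose_mul_self_le (R : Matrix n n ℂ) {Y : Matrix n m ℂ}
    (hY : Y * Yᴴ ≤ 1) : ((R * Y)ᴴ * (R * Y)).trace.re ≤ (R * Rᴴ).trace.re := by
  have h := ((le_iff.mp hY).mul_mul_conjTranspose_same R).trace_nonneg
  rw [Matrix.mul_sub, Matrix.sub_mul, Matrix.mul_one, trace_sub, sub_nonneg] at h
  rw [trace_mul_comm, conjTranspose_mul, ← Matrix.mul_assoc, Matrix.mul_assoc R]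
  exact (Complex.le_def.mp h).1

lemma mul_conjTranspose_mul_le_one {X : Matrix n n ℂ} {Y : Matrix n m ℂ} (hX : X * Xᴴ ≤ 1)
    (hY : Y * Yᴴ ≤ 1) : X * Y * (X * Y)ᴴ ≤ 1 :=
  calc X * Y * (X * Y)ᴴ = X * (Y * Yᴴ) * star X := by
        simp only [conjTranspose_mul, star_eq_conjTranspose, Matrix.mul_assoc]
    _ ≤ X * 1 * star X := star_right_conjugate_le_conjugate hY X
    _ ≤ 1 := by rwa [Matrix.mul_one]

/-- Uhlmann's inequality. With polar decompositions `A = √ρ U`, `B = √σ W` and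
`√ρ √σ = √(√ρ σ √ρ) U₀` (all of `U`, `W`, `U₀` contractions) and `√(√ρ σ √ρ) = Rᴴ R`, it is
Cauchy–Schwarz for `Tr ((R U)ᴴ (R U₀ W))`. -/
theorem norm_trace_conjTranspose_mul_le_fid (A B : Matrix n m ℂ) :
    ‖(Aᴴ * B).trace‖ ≤ fid (A * Aᴴ) (B * Bᴴ) := by
  have hρ := posSemidef_self_mul_conjTranspose A
  have hσ := posSemidef_self_mul_conjTranspose B
  obtain ⟨U, hAU, hU⟩ := exists_eq_msqrt_mul A
  obtain ⟨W, hBW, hW⟩ := exists_eq_msqrt_mul B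
  set P := msqrt (A * Aᴴ)
  set Q := msqrt (B * Bᴴ)
  obtain ⟨U₀, hPQ, hU₀⟩ := exists_eq_msqrt_mul (P * Q)
  have hT : P * Q * (P * Q)ᴴ = P * (B * Bᴴ) * P := by
    rw [conjTranspose_mul, conjTranspose_msqrt hρ, conjTranspose_msqrt hσ, ← Matrix.mul_assoc,
      Matrix.mul_assoc P Q Q, msqrt_mul_self hσ]
  rw [hT] at hPQ
  have hS : (msqrt (P * (B * Bᴴ) * P)).PosSemidef :=
    posSemidef_msqrt (hT ▸ posSemidef_self_mul_conjTranspose (P * Q))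
  obtain ⟨R, hR⟩ := CStarAlgebra.nonneg_iff_eq_star_mul_self.mp hS.nonneg
  have hAB : Aᴴ * B = (R * U)ᴴ * (R * (U₀ * W)) := by
    rw [hAU, hBW, conjTranspose_mul, conjTranspose_msqrt hρ, Matrix.mul_assoc,
      ← Matrix.mul_assoc P, hPQ, hR]
    simp only [star_eq_conjTranspose, conjTranspose_mul, Matrix.mul_assoc]
  have hfid : (R * Rᴴ).trace.re = fid (A * Aᴴ) (B * Bᴴ) := by
    rw [trace_mul_comm, ← star_eq_conjTranspose, ← hR]
    rfl
  calc ‖(Aᴴ * B).trace‖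
      ≤ √((R * U)ᴴ * (R * U)).trace.re * √((R * (U₀ * W))ᴴ * (R * (U₀ * W))).trace.re := by
        rw [hAB]
        exact norm_trace_conjTranspose_mul_le _ _
    _ ≤ √(R * Rᴴ).trace.re * √(R * Rᴴ).trace.re := by
        have h₁ := re_trace_conjTranspose_mul_self_le R hU
        have h₂ := re_trace_conjTranspose_mul_self_le R (mul_conjTranspose_mul_le_one hU₀ hW)
        exact mul_le_mul (Real.sqrt_le_sqrt h₁) (Real.sqrt_le_sqrt h₂) (Real.sqrt_nonneg _)
          (Real.sqrt_nonneg _)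
    _ = fid (A * Aᴴ) (B * Bᴴ) := by
        rw [Real.mul_self_sqrt
          (Complex.nonneg_iff.mp (posSemidef_self_mul_conjTranspose R).trace_nonneg).1, hfid]

theorem norm_trace_conjTranspose_mul_le_sqrt_mul_fid {A B : Matrix n m ℂ} {p q : ℝ}
    (hp : 0 < p) (hq : 0 < q) {ρ σ : Matrix n n ℂ}
    (hA : A * Aᴴ = (p : ℂ) • ρ) (hB : B * Bᴴ = (q : ℂ) • σ) :
    ‖(Aᴴ * B).trace‖ ≤ √p * √q * fid ρ σ := by
  have h := norm_trace_conjTranspose_mul_le_fid (((√p)⁻¹ : ℂ) • A) (((√q)⁻¹ : ℂ) • B)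
  rw [mul_conjTranspose_inv_sqrt_smul hp hA, mul_conjTranspose_inv_sqrt_smul hq hB,
    conjTranspose_smul, Matrix.smul_mul, Matrix.mul_smul, trace_smul, trace_smul, norm_smul,
    norm_smul, norm_star, norm_inv, norm_inv] at h
  simp only [Complex.norm_real, Real.norm_eq_abs, abs_of_nonneg (Real.sqrt_nonneg _)] at h
  have := Real.sqrt_pos.mpr hp
  have := Real.sqrt_pos.mpr hq
  calc ‖(Aᴴ * B).trace‖ = √p * √q * ((√p)⁻¹ * ((√q)⁻¹ * ‖(Aᴴ * B).trace‖)) := by field_simp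
    _ ≤ √p * √q * fid ρ σ := by gcongr

end Uhlmann

lemma outer_eq_vecMulVec {n : Type*} (φ : n → ℂ) : outer φ = vecMulVec φ (star φ) := rfl

section Outer
variable {n : Type*} [Fintype n]

lemma trace_outer (φ : n → ℂ) : (outer φ).trace = star φ ⬝ᵥ φ := by
  rw [outer_eq_vecMulVec, trace_vecMulVec, dotProduct_comm]

lemma posSemidef_outer (φ : n → ℂ) : (outer φ).PosSemidef := posSemidef_vecMulVec_self_star φ

lemma dot_eq_star_dotProduct (φ ψ : n → ℂ) : dot φ ψ = star φ ⬝ᵥ ψ := rfl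

lemma star_dotProduct_self_eq_sum_normSq (φ : n → ℂ) :
    star φ ⬝ᵥ φ = ((∑ i, Complex.normSq (φ i) : ℝ) : ℂ) := by
  simp [dotProduct, Complex.normSq_eq_conj_mul_self]

end Outer

section Kraus
variable {n : Type*} [Fintype n]

lemma apply_apply_eq_sum_choi [DecidableEq n] (E : Matrix n n ℂ →ₗ[ℂ] Matrix n n ℂ)
    (X : Matrix n n ℂ) (c e : n) :
    E X c e = ∑ a, ∑ b, X a b * choi E (a, c) (b, e) := by
  conv_lhs => rw [matrix_eq_sum_single X]
  simp only [map_sum, Matrix.sum_apply]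
  refine Finset.sum_congr rfl fun a _ => Finset.sum_congr rfl fun b _ => ?_
  rw [show single a b (X a b) = X a b • single a b 1 by simp, map_smul]
  rfl

theorem exists_kraus_of_posSemidef_choi [DecidableEq n] {E : Matrix n n ℂ →ₗ[ℂ] Matrix n n ℂ}
    (hE : (choi E).PosSemidef) :
    ∃ K : n × n → Matrix n n ℂ, ∀ X, E X = ∑ k, K k * X * (K k)ᴴ := by
  obtain ⟨R, hR⟩ := CStarAlgebra.nonneg_iff_eq_star_mul_self.mp hE.nonneg
  refine ⟨fun k => of fun c a => star (R k (a, c)), fun X => ?_⟩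
  ext c e
  simp only [apply_apply_eq_sum_choi, hR, Matrix.sum_apply, mul_apply, conjTranspose_apply,
    of_apply, star_star, star_eq_conjTranspose]
  simp_rw [Finset.mul_sum, Finset.sum_mul]
  rw [Finset.sum_comm]
  conv_rhs => rw [Finset.sum_comm]
  refine Finset.sum_congr rfl fun b _ => ?_
  rw [Finset.sum_comm]
  exact Finset.sum_congr rfl fun k _ => Finset.sum_congr rfl fun a _ => by ring

variable {ι : Type*} [Fintype ι] (K : ι → Matrix n n ℂ)

def krausColumns (φ : n → ℂ) : Matrix n ι ℂ := of fun c k => (K k *ᵥ φ) c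

lemma sum_mul_outer_mul_conjTranspose (φ : n → ℂ) :
    ∑ k, K k * outer φ * (K k)ᴴ = krausColumns K φ * (krausColumns K φ)ᴴ := by
  ext c e
  simp only [outer_eq_vecMulVec, Matrix.sum_apply, mul_apply, conjTranspose_apply,
    RCLike.star_def, Finset.sum_mul, krausColumns, mulVec, dotProduct, of_apply, star_sum,
    star_mul', Finset.mul_sum]
  exact Finset.sum_congr rfl fun k _ => Finset.sum_congr rfl fun j _ =>
    Finset.sum_congr rfl fun i _ => by rw [vecMulVec_apply, Pi.star_apply, Complex.star_def]; ring

lemma trace_krausColumns (φ ψ : n → ℂ) :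
    ((krausColumns K φ)ᴴ * krausColumns K ψ).trace = star φ ⬝ᵥ ((∑ k, (K k)ᴴ * K k) *ᵥ ψ) := by
  rw [← star_vec_dotProduct_vec, sum_mulVec, dotProduct_sum]
  simp only [star_dotProduct_conjTranspose_mul_mulVec]
  simp only [dotProduct, Fintype.sum_prod_type]
  rfl

variable [DecidableEq n] {K}

lemma sum_conjTranspose_mul_le_one
    (hK : ∀ X : Matrix n n ℂ, X.PosSemidef → (∑ k, K k * X * (K k)ᴴ).trace.re ≤ X.trace.re) :
    ∑ k, (K k)ᴴ * K k ≤ 1 := by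
  have hN : (∑ k, (K k)ᴴ * K k).IsHermitian :=
    (posSemidef_sum _ fun k _ => posSemidef_conjTranspose_mul_self (K k)).1
  have hQ := isHermitian_one.sub hN
  refine le_iff.mpr (.of_dotProduct_mulVec_nonneg hQ fun x => Complex.nonneg_iff.mpr
    ⟨?_, (hQ.im_star_dotProduct_mulVec_self x).symm⟩)
  have hx := hK (outer x) (posSemidef_outer x)
  rw [sum_mul_outer_mul_conjTranspose, trace_mul_comm, trace_krausColumns, trace_outer] at hx
  rw [sub_mulVec, one_mulVec, dotProduct_sub, Complex.sub_re]
  linarith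

theorem norm_star_dotProduct_le_of_kraus (hK : ∑ k, (K k)ᴴ * K k ≤ 1) {φ ψ : n → ℂ}
    (hφ : star φ ⬝ᵥ φ = 1) (hψ : star ψ ⬝ᵥ ψ = 1) {p q : ℝ} (hp : 0 < p) (hq : 0 < q)
    {ρ σ : Matrix n n ℂ} (hρ : ρ.trace = 1) (hσ : σ.trace = 1)
    (hφρ : ∑ k, K k * outer φ * (K k)ᴴ = (p : ℂ) • ρ)
    (hψσ : ∑ k, K k * outer ψ * (K k)ᴴ = (q : ℂ) • σ) :
    ‖star φ ⬝ᵥ ψ‖ ≤ √p * √q * fid ρ σ + √(1 - p) * √(1 - q) := by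
  set N := ∑ k, (K k)ᴴ * K k
  rw [sum_mul_outer_mul_conjTranspose] at hφρ hψσ
  have hN {χ : n → ℂ} {r : ℝ} {τ : Matrix n n ℂ} (hτ : τ.trace = 1)
      (h : krausColumns K χ * (krausColumns K χ)ᴴ = (r : ℂ) • τ) :
      star χ ⬝ᵥ (N *ᵥ χ) = r := by
    rw [← trace_krausColumns, trace_mul_comm, h, trace_smul, hτ, smul_eq_mul, mul_one]
  have hφN := hN hρ hφρ
  have hψN := hN hσ hψσ
  have hsplit : star φ ⬝ᵥ ψ = star φ ⬝ᵥ (N *ᵥ ψ) + star φ ⬝ᵥ ((1 - N) *ᵥ ψ) := by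
    rw [sub_mulVec, one_mulVec, dotProduct_sub]
    ring
  have h₁ : ‖star φ ⬝ᵥ (N *ᵥ ψ)‖ ≤ √p * √q * fid ρ σ := by
    rw [← trace_krausColumns]
    exact norm_trace_conjTranspose_mul_le_sqrt_mul_fid hp hq hφρ hψσ
  have h₂ : ‖star φ ⬝ᵥ ((1 - N) *ᵥ ψ)‖ ≤ √(1 - p) * √(1 - q) := by
    have h := (le_iff.mp hK).norm_star_dotProduct_mulVec_le φ ψ
    simp only [sub_mulVec, one_mulVec, dotProduct_sub] at h ⊢
    simpa [hφ, hψ, hφN, hψN] using h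
  rw [hsplit]
  exact (norm_add_le _ _).trans (add_le_add h₁ h₂)

end Kraus

lemma min_le_div_of_le_sqrt_mul_add {p q F o : ℝ} (hp₀ : 0 ≤ p) (hp₁ : p ≤ 1) (hq₀ : 0 ≤ q)
    (hq₁ : q ≤ 1) (hF : F < o) (ho : o ≤ 1)
    (h : o ≤ √p * √q * F + √(1 - p) * √(1 - q)) :
    min p q ≤ (1 - o) / (1 - F) := by
  have hcs : √p * √q + √(1 - p) * √(1 - q) ≤ 1 := by
    have := Real.sq_sqrt hp₀
    have := Real.sq_sqrt hq₀
    have := Real.sq_sqrt (sub_nonneg.2 hp₁)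
    have := Real.sq_sqrt (sub_nonneg.2 hq₁)
    nlinarith [sq_nonneg (√p * √(1 - q) - √q * √(1 - p))]
  have hmin : min p q ≤ √p * √q :=
    calc min p q = √(min p q) * √(min p q) := (Real.mul_self_sqrt (le_min hp₀ hq₀)).symm
      _ ≤ √p * √q := by gcongr; exacts [min_le_left _ _, min_le_right _ _]
  rw [le_div_iff₀ (by linarith)]
  calc min p q * (1 - F) ≤ √p * √q * (1 - F) := mul_le_mul_of_nonneg_right hmin (by linarith)
    _ ≤ 1 - o := by linarith

theorem prob_bound_mixed_targets_general {d : ℕ} (ψp ψm : Fin d → ℂ)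
    (hψp : ∑ i, Complex.normSq (ψp i) = 1) (hψm : ∑ i, Complex.normSq (ψm i) = 1)
    (ρp ρm : Matrix (Fin d) (Fin d) ℂ)
    (htp : ρp.trace = 1) (htm : ρm.trace = 1)
    (E : Matrix (Fin d) (Fin d) ℂ →ₗ[ℂ] Matrix (Fin d) (Fin d) ℂ) (hE : IsQuantumOp E)
    (pp pm : ℝ) (hpp : 0 < pp) (hpm : 0 < pm)
    (hEp : E (outer ψp) = (pp : ℂ) • ρp)
    (hEm : E (outer ψm) = (pm : ℂ) • ρm)
    (hov : fid ρp ρm < ‖dot ψp ψm‖) :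
    min pp pm ≤ (1 - ‖dot ψp ψm‖) / (1 - fid ρp ρm) := by
  obtain ⟨K, hK⟩ := exists_kraus_of_posSemidef_choi hE.1
  have hunit {ψ : Fin d → ℂ} (h : ∑ i, Complex.normSq (ψ i) = 1) : star ψ ⬝ᵥ ψ = 1 := by
    rw [star_dotProduct_self_eq_sum_normSq, h, Complex.ofReal_one]
  have hprob {ψ : Fin d → ℂ} {p : ℝ} {ρ : Matrix (Fin d) (Fin d) ℂ}
      (h : ∑ i, Complex.normSq (ψ i) = 1) (hρ : ρ.trace = 1) (hEψ : E (outer ψ) = (p : ℂ) • ρ) :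
      p ≤ 1 := by
    simpa [hEψ, hρ, trace_outer, hunit h] using hE.2 _ (posSemidef_outer ψ)
  have hdot : ‖dot ψp ψm‖ ≤ 1 := by
    simpa [dot_eq_star_dotProduct, hunit hψp, hunit hψm] using norm_star_dotProduct_le ψp ψm
  refine min_le_div_of_le_sqrt_mul_add hpp.le (hprob hψp htp hEp) hpm.le (hprob hψm htm hEm)
    hov hdot ?_
  rw [dot_eq_star_dotProduct]
  refine norm_star_dotProduct_le_of_kraus ?_ (hunit hψp) (hunit hψm) hpp hpm htp htm
    ((hK _).symm.trans hEp) ((hK _).symm.trans hEm)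
  exact sum_conjTranspose_mul_le_one fun X hX => hK X ▸ hE.2 X hX

theorem prob_bound_mixed_targets {d : ℕ} (ψp ψm : Fin d → ℂ)
    (hψp : ∑ i, Complex.normSq (ψp i) = 1) (hψm : ∑ i, Complex.normSq (ψm i) = 1)
    (ρp ρm : Matrix (Fin d) (Fin d) ℂ) (hρp : ρp.PosSemidef) (hρm : ρm.PosSemidef)
    (htp : ρp.trace = 1) (htm : ρm.trace = 1)
    (E : Matrix (Fin d) (Fin d) ℂ →ₗ[ℂ] Matrix (Fin d) (Fin d) ℂ) (hE : IsQuantumOp E)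
    (pp pm : ℝ) (hpp : 0 < pp) (hpm : 0 < pm)
    (hEp : E (outer ψp) = (pp : ℂ) • ρp)
    (hEm : E (outer ψm) = (pm : ℂ) • ρm)
    (hov : fid ρp ρm < ‖dot ψp ψm‖) :
    min pp pm ≤ (1 - ‖dot ψp ψm‖) / (1 - fid ρp ρm) :=
  prob_bound_mixed_targets_general ψp ψm hψp hψm ρp ρm htp htm E hE pp pm hpp hpm hEp hEm hov
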